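/- Soundness with abstraction substitutions: let ⟨A0;S0;T0;θ0⟩ ⟹* ⟨∅;S_n;T_n;θ_n⟩ be an AUnif derivation to a final configuration and let s ≜_x t ∈ A0 ∪ S0. Then for every abstraction substitution τ ∈ Ψ(T_n,S_n), the term xθ_nτ is an Abs-generalization of s and t. -/

import Mathlib

/- Common development: first-order terms, absorption theories, anti-unification
   equations, configurations and the AUnif transformation rules. -/

namespace AbsAU

/-- First-order terms over a set `F` of function symbols, with variables drawn
from the countably infinite set `ℕ`. -/
inductive Tm (F : Type) : Type where
  | var : ℕ → Tm F
  | app : F → List (Tm F) → Tm F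

namespace Tm

/-- Application of a substitution (given as a total map on variables) to a term. -/
def subst (σ : ℕ → Tm F) : Tm F → Tm F
  | var x => σ x
  | app f ts => app f (ts.attach.map fun t => subst σ t.1)
decreasing_by
  have := List.sizeOf_lt_of_mem t.2
  simp only [Tm.app.sizeOf_spec]
  omega

/-- The head of a term: a variable or a function symbol. -/
def head : Tm F → ℕ ⊕ F
  | var x => Sum.inl x
  | app f _ => Sum.inr f

end Tm

/-- `VarIn x t` holds iff the variable `x` occurs in the term `t`. -/
inductive VarIn {F : Type} : ℕ → Tm F → Prop where
  | var (x : ℕ) : VarIn x (.var x)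
  | app {x : ℕ} {t : Tm F} (f : F) {ts : List (Tm F)} :
      t ∈ ts → VarIn x t → VarIn x (.app f ts)

/-- `SymOcc f t` holds iff the function symbol `f` occurs in the term `t`. -/
inductive SymOcc {F : Type} (f : F) : Tm F → Prop where
  | head (ts : List (Tm F)) : SymOcc f (.app f ts)
  | arg {t : Tm F} (g : F) {ts : List (Tm F)} :
      t ∈ ts → SymOcc f t → SymOcc f (.app g ts)

/-- Signature data: an arity for every symbol and the distinguished wild card
constant `⋆`. -/
structure AbsSig (F : Type) where
  arity : F → ℕ
  star : F
  star_arity : arity star = 0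

/-- Arity-respecting (well-formed) terms. -/
inductive WFT {F : Type} (Sg : AbsSig F) : Tm F → Prop where
  | var (x : ℕ) : WFT Sg (.var x)
  | app {f : F} {ts : List (Tm F)} :
      ts.length = Sg.arity f → (∀ t ∈ ts, WFT Sg t) → WFT Sg (.app f ts)

/-- An absorption theory: finitely many pairs `(f, ε_f)` of a binary symbol
together with its absorption constant, all chosen symbols pairwise distinct and
distinct from the wild card. -/
structure AbsTh {F : Type} (Sg : AbsSig F) where
  pairs : Set (F × F)
  finite : pairs.Finite
  binary : ∀ p ∈ pairs, Sg.arity p.1 = 2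
  constZ : ∀ p ∈ pairs, Sg.arity p.2 = 0
  distinct : ∀ p ∈ pairs, ∀ q ∈ pairs, p ≠ q →
      p.1 ≠ q.1 ∧ p.1 ≠ q.2 ∧ p.2 ≠ q.1 ∧ p.2 ≠ q.2
  ne : ∀ p ∈ pairs, p.1 ≠ p.2
  star_ne : ∀ p ∈ pairs, Sg.star ≠ p.1 ∧ Sg.star ≠ p.2

variable {F : Type}

/-- `≈_Abs` : the least congruence on terms containing all substitution
instances of the absorption axioms `f(ε_f, x) ≈ ε_f` and `f(x, ε_f) ≈ ε_f`. -/
inductive AbsEq {Sg : AbsSig F} (Th : AbsTh Sg) : Tm F → Tm F → Prop where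
  | absL {f e : F} (t : Tm F) : (f, e) ∈ Th.pairs →
      AbsEq Th (.app f [.app e [], t]) (.app e [])
  | absR {f e : F} (t : Tm F) : (f, e) ∈ Th.pairs →
      AbsEq Th (.app f [t, .app e []]) (.app e [])
  | refl (t : Tm F) : AbsEq Th t t
  | symm {s t : Tm F} : AbsEq Th s t → AbsEq Th t s
  | trans {s t u : Tm F} : AbsEq Th s t → AbsEq Th t u → AbsEq Th s u
  | congr (f : F) {ss ts : List (Tm F)} :
      List.Forall₂ (AbsEq Th) ss ts → AbsEq Th (.app f ss) (.app f ts)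

/-- The domain of a substitution. -/
def Dom (σ : ℕ → Tm F) : Set ℕ := {x | σ x ≠ .var x}

/-- A substitution proper has a finite domain. -/
def FinDom (σ : ℕ → Tm F) : Prop := (Dom σ).Finite

/-- The variables occurring in the range of a substitution. -/
def Rvar (σ : ℕ → Tm F) : Set ℕ := {y | ∃ x ∈ Dom σ, VarIn y (σ x)}

/-- `r ≲_Abs s` : `r` is more general than `s` modulo the absorption theory. -/
def MoreGen {Sg : AbsSig F} (Th : AbsTh Sg) (r s : Tm F) : Prop :=
  ∃ σ : ℕ → Tm F, FinDom σ ∧ AbsEq Th (r.subst σ) s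

/-- `r` is an `Abs`-generalization of `s` and `t`. -/
def Gen {Sg : AbsSig F} (Th : AbsTh Sg) (r s t : Tm F) : Prop :=
  MoreGen Th r s ∧ MoreGen Th r t

/-- The set of all `Abs`-generalizations of `s` and `t`. -/
def GAbs {Sg : AbsSig F} (Th : AbsTh Sg) (s t : Tm F) : Set (Tm F) :=
  {r | Gen Th r s t}

/-- `M` is a minimal complete set of `Abs`-generalizations of `s` and `t`. -/
def IsMCSG {Sg : AbsSig F} (Th : AbsTh Sg) (M : Set (Tm F)) (s t : Tm F) : Prop :=
  M ⊆ GAbs Th s t ∧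
  (∀ r ∈ GAbs Th s t, ∃ r' ∈ M, MoreGen Th r r') ∧
  (∀ r ∈ M, ∀ r' ∈ M, MoreGen Th r r' → r = r')

/-- `Abs`-normal forms: no absorption constant occurs as an argument of its
absorption symbol. -/
inductive NF {Sg : AbsSig F} (Th : AbsTh Sg) : Tm F → Prop where
  | var (x : ℕ) : NF Th (.var x)
  | app {f : F} {ts : List (Tm F)} :
      (∀ t ∈ ts, NF Th t) →
      (∀ e : F, (f, e) ∈ Th.pairs → Tm.app e [] ∉ ts) →
      NF Th (.app f ts)

/-- An anti-unification equation (AUE) `lhs ≜_lab rhs`. -/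
structure AUE (F : Type) where
  lhs : Tm F
  lab : ℕ
  rhs : Tm F

/-- The labels of a set of AUEs. -/
def labels (W : Set (AUE F)) : Set ℕ := AUE.lab '' W

/-- A set of AUEs is valid if its labels are pairwise distinct. -/
def ValidAUEs (W : Set (AUE F)) : Prop :=
  ∀ a ∈ W, ∀ b ∈ W, a.lab = b.lab → a = b

/-- The wild card, as a term. -/
def starTm (Sg : AbsSig F) : Tm F := .app Sg.star []

/-- A wild AUE has the wild card on one of its sides. -/
def WildAUE (Sg : AbsSig F) (a : AUE F) : Prop :=
  a.lhs = starTm Sg ∨ a.rhs = starTm Sg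

/-- The heads of `s` and `t` form a related absorption pair. -/
def RelatedAbs {Sg : AbsSig F} (Th : AbsTh Sg) (s t : Tm F) : Prop :=
  ∃ f e : F, (f, e) ∈ Th.pairs ∧
    ((s.head = Sum.inr f ∧ t.head = Sum.inr e) ∨
     (s.head = Sum.inr e ∧ t.head = Sum.inr f))

/-- A solved AUE: distinct heads, no related absorption symbols, not wild. -/
def SolvedAUE {Sg : AbsSig F} (Th : AbsTh Sg) (a : AUE F) : Prop :=
  a.lhs.head ≠ a.rhs.head ∧ ¬ RelatedAbs Th a.lhs a.rhs ∧ ¬ WildAUE Sg a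

/-- A proper object term appearing in an AUE of a configuration: in
`Abs`-normal form, arity-respecting, ground, and wild-card free. -/
def GoodTm {Sg : AbsSig F} (Th : AbsTh Sg) (t : Tm F) : Prop :=
  NF Th t ∧ WFT Sg t ∧ (∀ x : ℕ, ¬ VarIn x t) ∧ ¬ SymOcc Sg.star t

/-- A configuration `⟨A; S; T; θ⟩`. -/
structure Config (F : Type) where
  A : Set (AUE F)
  S : Set (AUE F)
  T : Set (AUE F)
  θ : ℕ → Tm F

/-- The defining properties of configurations: `A`, `S`, `T` are (finite) valid
sets of unsolved, solved, resp. wild AUEs over object terms in `Abs`-normal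
form, `θ` is a substitution, (i) the labels of `A`, `S`, `T` and the domain of
`θ` are pairwise disjoint, and (ii) the variables occurring in the range of `θ`
are exactly the labels of `A`, `S` and `T`. -/
structure IsConfig {Sg : AbsSig F} (Th : AbsTh Sg) (C : Config F) : Prop where
  finA : C.A.Finite
  finS : C.S.Finite
  finT : C.T.Finite
  validA : ValidAUEs C.A
  validS : ValidAUEs C.S
  validT : ValidAUEs C.T
  goodA : ∀ a ∈ C.A, GoodTm Th a.lhs ∧ GoodTm Th a.rhs
  goodS : ∀ a ∈ C.S, GoodTm Th a.lhs ∧ GoodTm Th a.rhs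
  solvedS : ∀ a ∈ C.S, SolvedAUE Th a
  wildT : ∀ a ∈ C.T,
      (a.lhs = starTm Sg ∧ GoodTm Th a.rhs) ∨
      (a.rhs = starTm Sg ∧ GoodTm Th a.lhs)
  finDom : FinDom C.θ
  nfθ : ∀ x : ℕ, NF Th (C.θ x) ∧ WFT Sg (C.θ x)
  disjAS : Disjoint (labels C.A) (labels C.S)
  disjAT : Disjoint (labels C.A) (labels C.T)
  disjST : Disjoint (labels C.S) (labels C.T)
  disjAD : Disjoint (labels C.A) (Dom C.θ)
  disjSD : Disjoint (labels C.S) (Dom C.θ)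
  disjTD : Disjoint (labels C.T) (Dom C.θ)
  rvarEq : Rvar C.θ = labels C.A ∪ labels C.S ∪ labels C.T

/-- The substitution `{x ↦ t}`. -/
def single (x : ℕ) (t : Tm F) : ℕ → Tm F :=
  fun z => if z = x then t else .var z

/-- Composition `θ{x ↦ t}` of a substitution with a single binding. -/
def compOne (θ : ℕ → Tm F) (x : ℕ) (t : Tm F) : ℕ → Tm F :=
  fun z => (θ z).subst (single x t)

/-- A variable is fresh for a configuration. -/
def FreshIn (C : Config F) (y : ℕ) : Prop :=
  y ∉ labels C.A ∧ y ∉ labels C.S ∧ y ∉ labels C.T ∧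
  y ∉ Dom C.θ ∧ y ∉ Rvar C.θ

/-- Canonical choice of the next fresh variable for a configuration. -/
noncomputable def nextFresh (C : Config F) : ℕ :=
  sInf {k : ℕ | ∀ m : ℕ, k ≤ m → FreshIn C m}

/-- The set of AUEs `{s₁ ≜_{y₁} t₁, …, sₙ ≜_{yₙ} tₙ}`. -/
def zipAUEs (ss : List (Tm F)) (ys : List ℕ) (ts : List (Tm F)) : Set (AUE F) :=
  {a | ∃ (i : ℕ) (h1 : i < ss.length) (h2 : i < ys.length) (h3 : i < ts.length),
      a = ⟨ss.get ⟨i, h1⟩, ys.get ⟨i, h2⟩, ts.get ⟨i, h3⟩⟩}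

/-- The AUnif transformation rules: Decompose, Solve, the four Expansion rules
for left/right absorption, and Merge. -/
inductive Step {Sg : AbsSig F} (Th : AbsTh Sg) : Config F → Config F → Prop where
  | dec (f : F) (ss ts : List (Tm F)) (x : ℕ) (ys : List ℕ)
      (A S T : Set (AUE F)) (θ : ℕ → Tm F)
      (hlen : ss.length = ts.length)
      (hnotin : (⟨.app f ss, x, .app f ts⟩ : AUE F) ∉ A)
      (hys : ys = (List.range ss.length).map
          (fun i => nextFresh (⟨insert ⟨.app f ss, x, .app f ts⟩ A, S, T, θ⟩ : Config F) + i)) :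
      Step Th ⟨insert ⟨.app f ss, x, .app f ts⟩ A, S, T, θ⟩
        ⟨zipAUEs ss ys ts ∪ A, S, T, compOne θ x (.app f (ys.map Tm.var))⟩
  | sol (a : AUE F) (A S T : Set (AUE F)) (θ : ℕ → Tm F)
      (hhead : a.lhs.head ≠ a.rhs.head)
      (hrel : ¬ RelatedAbs Th a.lhs a.rhs)
      (hnotin : a ∉ A) :
      Step Th ⟨insert a A, S, T, θ⟩ ⟨A, insert a S, T, θ⟩
  | expLA1 (f e : F) (t1 t2 : Tm F) (x y1 y2 : ℕ)
      (A S T : Set (AUE F)) (θ : ℕ → Tm F)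
      (hp : (f, e) ∈ Th.pairs)
      (hnotin : (⟨.app e [], x, .app f [t1, t2]⟩ : AUE F) ∉ A)
      (hy1 : y1 = nextFresh (⟨insert ⟨.app e [], x, .app f [t1, t2]⟩ A, S, T, θ⟩ : Config F))
      (hy2 : y2 = y1 + 1) :
      Step Th ⟨insert ⟨.app e [], x, .app f [t1, t2]⟩ A, S, T, θ⟩
        ⟨insert ⟨.app e [], y1, t1⟩ A, S, insert ⟨starTm Sg, y2, t2⟩ T,
          compOne θ x (.app f [.var y1, .var y2])⟩
  | expLA2 (f e : F) (t1 t2 : Tm F) (x y1 y2 : ℕ)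
      (A S T : Set (AUE F)) (θ : ℕ → Tm F)
      (hp : (f, e) ∈ Th.pairs)
      (hnotin : (⟨.app e [], x, .app f [t1, t2]⟩ : AUE F) ∉ A)
      (hy1 : y1 = nextFresh (⟨insert ⟨.app e [], x, .app f [t1, t2]⟩ A, S, T, θ⟩ : Config F))
      (hy2 : y2 = y1 + 1) :
      Step Th ⟨insert ⟨.app e [], x, .app f [t1, t2]⟩ A, S, T, θ⟩
        ⟨insert ⟨.app e [], y2, t2⟩ A, S, insert ⟨starTm Sg, y1, t1⟩ T,
          compOne θ x (.app f [.var y1, .var y2])⟩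
  | expRA1 (f e : F) (s1 s2 : Tm F) (x y1 y2 : ℕ)
      (A S T : Set (AUE F)) (θ : ℕ → Tm F)
      (hp : (f, e) ∈ Th.pairs)
      (hnotin : (⟨.app f [s1, s2], x, .app e []⟩ : AUE F) ∉ A)
      (hy1 : y1 = nextFresh (⟨insert ⟨.app f [s1, s2], x, .app e []⟩ A, S, T, θ⟩ : Config F))
      (hy2 : y2 = y1 + 1) :
      Step Th ⟨insert ⟨.app f [s1, s2], x, .app e []⟩ A, S, T, θ⟩
        ⟨insert ⟨s1, y1, .app e []⟩ A, S, insert ⟨s2, y2, starTm Sg⟩ T,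
          compOne θ x (.app f [.var y1, .var y2])⟩
  | expRA2 (f e : F) (s1 s2 : Tm F) (x y1 y2 : ℕ)
      (A S T : Set (AUE F)) (θ : ℕ → Tm F)
      (hp : (f, e) ∈ Th.pairs)
      (hnotin : (⟨.app f [s1, s2], x, .app e []⟩ : AUE F) ∉ A)
      (hy1 : y1 = nextFresh (⟨insert ⟨.app f [s1, s2], x, .app e []⟩ A, S, T, θ⟩ : Config F))
      (hy2 : y2 = y1 + 1) :
      Step Th ⟨insert ⟨.app f [s1, s2], x, .app e []⟩ A, S, T, θ⟩
        ⟨insert ⟨s2, y2, .app e []⟩ A, S, insert ⟨s1, y1, starTm Sg⟩ T,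
          compOne θ x (.app f [.var y1, .var y2])⟩
  | mer (s t : Tm F) (x y : ℕ) (S T : Set (AUE F)) (θ : ℕ → Tm F)
      (hxy : x ≠ y)
      (hx : (⟨s, x, t⟩ : AUE F) ∉ S) (hy : (⟨s, y, t⟩ : AUE F) ∉ S) :
      Step Th ⟨∅, insert ⟨s, x, t⟩ (insert ⟨s, y, t⟩ S), T, θ⟩
        ⟨∅, insert ⟨s, y, t⟩ S, T, compOne θ x (.var y)⟩

/-- A final (normal) configuration: no rule applies. -/
def Final {Sg : AbsSig F} (Th : AbsTh Sg) (C : Config F) : Prop :=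
  ∀ C' : Config F, ¬ Step Th C C'

/-- `AUnif(C)`: the set of final configurations reachable from `C`. -/
def AUnifSet {Sg : AbsSig F} (Th : AbsTh Sg) (C : Config F) : Set (Config F) :=
  {C' | Relation.ReflTransGen (Step Th) C C' ∧ Final Th C'}

open Classical in
/-- The left substitution `σ_W` associated with a set of AUEs. -/
noncomputable def sigmaW (W : Set (AUE F)) : ℕ → Tm F :=
  fun y => if h : ∃ a, a ∈ W ∧ a.lab = y then h.choose.lhs else .var y

open Classical in
/-- The right substitution `ρ_W` associated with a set of AUEs. -/
noncomputable def rhoW (W : Set (AUE F)) : ℕ → Tm F :=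
  fun y => if h : ∃ a, a ∈ W ∧ a.lab = y then h.choose.rhs else .var y

/-- The abstraction set `↑(t, σ)`. -/
def absSet {Sg : AbsSig F} (Th : AbsTh Sg) (t : Tm F) (σ : ℕ → Tm F) : Set (Tm F) :=
  {r | AbsEq Th (r.subst σ) t ∧ NF Th r ∧ ∀ x : ℕ, VarIn x r → x ∈ Dom σ}

/-- `Ψ(T, S)`: the set of abstraction substitutions of a configuration with
abstraction `T` and store `S`. -/
def Psi {Sg : AbsSig F} (Th : AbsTh Sg) (T S : Set (AUE F)) : Set (ℕ → Tm F) :=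
  {τ | Dom τ = labels T ∧ ∀ a ∈ T,
      (a.lhs = starTm Sg → τ a.lab ∈ absSet Th a.rhs (rhoW S)) ∧
      (a.rhs = starTm Sg → τ a.lab ∈ absSet Th a.lhs (sigmaW S))}

/-- The initial configuration `⟨{s ≜_x t}; ∅; ∅; ι⟩` with starting label `xst`
and starting substitution `ι = {xst ↦ x}`. -/
def initConfig (s t : Tm F) (x xst : ℕ) : Config F :=
  ⟨{⟨s, x, t⟩}, ∅, ∅, single xst (.var x)⟩

/-- `AUnif(C₀)` is merged: identical solved AUEs in (possibly different) final
stores carry the same label, and equal labels carry identical AUEs. -/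
def Merged {Sg : AbsSig F} (Th : AbsTh Sg) (C0 : Config F) : Prop :=
  ∀ C1 ∈ AUnifSet Th C0, ∀ C2 ∈ AUnifSet Th C0, ∀ a ∈ C1.S, ∀ b ∈ C2.S,
    ((a.lhs = b.lhs ∧ a.rhs = b.rhs) ↔ a.lab = b.lab)

/-- `C_AUnif(s, t)`: all generalizations computed from final configurations of
the initial configuration for `s ≜_x t`, instantiated by abstraction
substitutions. -/
def CAUnif {Sg : AbsSig F} (Th : AbsTh Sg) (s t : Tm F) (x xst : ℕ) : Set (Tm F) :=
  {g | ∃ C' ∈ AUnifSet Th (initConfig s t x xst),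
      ∃ τ ∈ Psi Th C'.T C'.S, g = (C'.θ x).subst τ}

/-- Linear terms: no variable occurs more than once. -/
inductive Linear {F : Type} : Tm F → Prop where
  | var (x : ℕ) : Linear (.var x)
  | app (f : F) {ts : List (Tm F)} :
      (∀ t ∈ ts, Linear t) →
      List.Pairwise (fun s t => ∀ x : ℕ, VarIn x s → ¬ VarIn x t) ts →
      Linear (.app f ts)

/-!
Both sides are handled alike, backwards along the derivation. Say that `φ` solves side `b` of
a configuration if it maps the label of every AUE in `A ∪ S`, and of every wild AUE whose wild
card is on the other side, to side `b` of that AUE modulo `Abs`. In a final configuration,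
`τ` followed by `σ_S` (resp. `ρ_S`) solves the left (resp. right) side. Every rule binds a label
`x` of an AUE it consumes to some `t`, and `{x ↦ t}` followed by a solution of the successor
solves the predecessor and yields the same instance of `θ`; for the expansion rules this is one
absorption axiom. As `θ₀` does not bind the label of `s ≜_x t`, the solution of the initial
configuration sends `xθₙτ` to `s`, resp. `t`.
-/

namespace Tm

@[simp] theorem subst_var (σ : ℕ → Tm F) (x : ℕ) : (var x).subst σ = σ x := by
  rw [subst]

@[simp] theorem subst_app (σ : ℕ → Tm F) (f : F) (ts : List (Tm F)) :
    (app f ts).subst σ = app f (ts.map (subst σ)) := by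
  rw [subst, List.attach_map_val (f := subst σ)]

theorem subst_subst (σ ρ : ℕ → Tm F) : ∀ t : Tm F,
    (t.subst σ).subst ρ = t.subst (fun v => (σ v).subst ρ)
  | var _ => by simp
  | app f ts => by
      simp only [subst_app, List.map_map]
      exact congrArg _ (List.map_congr_left fun t ht => subst_subst σ ρ t)
decreasing_by
  have := List.sizeOf_lt_of_mem ht
  simp only [Tm.app.sizeOf_spec]
  omega

end Tm

open Tm

theorem finite_setOf_varIn : ∀ t : Tm F, {y : ℕ | VarIn y t}.Finite
  | .var _ => (Set.finite_singleton _).subset (by rintro y ⟨⟩; rfl)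
  | .app f ts => by
      refine (ts.finite_toSet.biUnion fun t _ => finite_setOf_varIn t).subset ?_
      rintro y ⟨⟩
      exact Set.mem_biUnion ‹_› ‹_›
decreasing_by
  have := List.sizeOf_lt_of_mem ‹t ∈ ts›
  simp only [Tm.app.sizeOf_spec]
  omega

theorem FinDom.finite_rvar {θ : ℕ → Tm F} (h : FinDom θ) : (Rvar θ).Finite :=
  (h.biUnion fun x _ => finite_setOf_varIn (θ x)).subset
    fun _ ⟨_, hx, hv⟩ => Set.mem_biUnion hx hv

theorem single_self (x : ℕ) (t : Tm F) : single x t x = t := if_pos rfl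

theorem single_of_ne {x v : ℕ} (hv : v ≠ x) (t : Tm F) : single x t v = .var v := if_neg hv

theorem FinDom.compOne {θ : ℕ → Tm F} (h : FinDom θ) (x : ℕ) (t : Tm F) :
    FinDom (compOne θ x t) := by
  refine (h.union (Set.finite_singleton x)).subset fun z hz => ?_
  by_contra hzx
  simp only [Set.mem_union, Set.mem_singleton_iff, Dom, Set.mem_ofPred_eq, not_or,
    not_not] at hzx
  exact hz (by rw [AbsAU.compOne, hzx.1, subst_var, single_of_ne hzx.2])

section Labels

variable {a b : AUE F} {W V : Set (AUE F)}

theorem mem_labels (h : a ∈ W) : a.lab ∈ labels W := ⟨a, h, rfl⟩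

theorem labels_union (W V : Set (AUE F)) : labels (W ∪ V) = labels W ∪ labels V :=
  Set.image_union _ _ _

theorem labels_insert (a : AUE F) (W : Set (AUE F)) :
    labels (insert a W) = insert a.lab (labels W) := Set.image_insert_eq

theorem labels_mono (h : W ⊆ V) : labels W ⊆ labels V := Set.image_mono h

theorem ValidAUEs.mono (hV : ValidAUEs V) (h : W ⊆ V) : ValidAUEs W :=
  fun a ha b hb => hV a (h ha) b (h hb)

theorem ValidAUEs.union (hW : ValidAUEs W) (hV : ValidAUEs V)
    (hd : Disjoint (labels W) (labels V)) : ValidAUEs (W ∪ V) := by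
  rintro a (ha | ha) b (hb | hb) hab
  · exact hW a ha b hb hab
  · exact absurd (hab ▸ mem_labels hb) (Set.disjoint_left.1 hd (mem_labels ha))
  · exact absurd (hab ▸ mem_labels ha) (Set.disjoint_left.1 hd (mem_labels hb))
  · exact hV a ha b hb hab

theorem validAUEs_insert (hW : ValidAUEs W) (ha : a.lab ∉ labels W) :
    ValidAUEs (insert a W) := by
  rw [Set.insert_eq]
  refine ValidAUEs.union (fun _ hb _ hc _ => hb.trans hc.symm) hW ?_
  simpa only [labels, Set.image_singleton, Set.disjoint_singleton_left] using ha

theorem ValidAUEs.lab_notMem_labels (hV : ValidAUEs (insert a W)) (ha : a ∉ W) :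
    a.lab ∉ labels W := by
  rintro ⟨b, hb, hab⟩
  exact ha (hV b (Set.mem_insert_of_mem _ hb) a (Set.mem_insert _ _) hab ▸ hb)

theorem zipAUEs_finite (ss : List (Tm F)) (ys : List ℕ) (ts : List (Tm F)) :
    (zipAUEs ss ys ts).Finite := by
  refine (((ss.zip (ys.zip ts)).map fun p => (⟨p.1, p.2.1, p.2.2⟩ : AUE F)).finite_toSet).subset
    ?_
  rintro a ⟨i, h1, h2, h3, rfl⟩
  have hi : i < (ss.zip (ys.zip ts)).length := by simp only [List.length_zip]; omega
  exact List.mem_map.2 ⟨_, List.getElem_mem hi, by simp [List.getElem_zip]⟩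

theorem lab_mem_of_mem_zipAUEs {ss ts : List (Tm F)} {ys : List ℕ}
    (ha : a ∈ zipAUEs ss ys ts) : a.lab ∈ ys := by
  obtain ⟨i, -, h2, -, rfl⟩ := ha
  exact List.get_mem _ _

theorem validAUEs_zipAUEs (ss : List (Tm F)) {ys : List ℕ} (ts : List (Tm F))
    (hys : ys.Nodup) : ValidAUEs (zipAUEs ss ys ts) := by
  rintro _ ⟨i, hi1, hi2, hi3, rfl⟩ _ ⟨j, hj1, hj2, hj3, rfl⟩ hij
  obtain rfl : i = j := by simpa [hys.getElem_inj_iff] using hij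
  rfl

end Labels

section

variable {Sg : AbsSig F} {Th : AbsTh Sg}

/-- The part of `IsConfig` that the AUnif rules preserve and the soundness argument needs. -/
structure WellLabeled (C : Config F) : Prop where
  finA : C.A.Finite
  finS : C.S.Finite
  finT : C.T.Finite
  validA : ValidAUEs C.A
  validS : ValidAUEs C.S
  disjAS : Disjoint (labels C.A) (labels C.S)
  disjAT : Disjoint (labels C.A) (labels C.T)
  disjST : Disjoint (labels C.S) (labels C.T)
  finDom : FinDom C.θ

theorem IsConfig.wellLabeled {C : Config F} (h : IsConfig Th C) : WellLabeled C :=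
  ⟨h.finA, h.finS, h.finT, h.validA, h.validS, h.disjAS, h.disjAT, h.disjST, h.finDom⟩

namespace WellLabeled

theorem eq_of_lab_eq {C : Config F} (h : WellLabeled C) {a a0 : AUE F}
    (ha0 : a0 ∈ C.A ∪ C.S) (ha : a ∈ C.A ∪ C.S ∪ C.T) (hlab : a.lab = a0.lab) : a = a0 := by
  have hd {W V : Set (AUE F)} (hWV : Disjoint (labels W) (labels V)) {a b : AUE F}
      (ha : a ∈ W) (hb : b ∈ V) (hab : a.lab = b.lab) : False :=
    Set.disjoint_left.1 hWV (mem_labels ha) (hab ▸ mem_labels hb)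
  rcases ha0 with h0 | h0 <;> rcases ha with (ha | ha) | ha
  · exact h.validA a ha a0 h0 hlab
  · exact (hd h.disjAS h0 ha hlab.symm).elim
  · exact (hd h.disjAT h0 ha hlab.symm).elim
  · exact (hd h.disjAS ha h0 hlab).elim
  · exact h.validS a ha a0 h0 hlab
  · exact (hd h.disjST h0 ha hlab.symm).elim

theorem freshIn_of_nextFresh_le {C : Config F} (h : WellLabeled C) {m : ℕ}
    (hm : nextFresh C ≤ m) : FreshIn C m := by
  have hU : (labels C.A ∪ labels C.S ∪ labels C.T ∪ Dom C.θ ∪ Rvar C.θ).Finite :=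
    ((((h.finA.image _).union (h.finS.image _)).union (h.finT.image _)).union
      h.finDom).union h.finDom.finite_rvar
  obtain ⟨k, hk⟩ := hU.bddAbove
  have hfresh : k + 1 ∈ {k : ℕ | ∀ m, k ≤ m → FreshIn C m} := by
    intro m hm
    have hmU : m ∉ labels C.A ∪ labels C.S ∪ labels C.T ∪ Dom C.θ ∪ Rvar C.θ :=
      fun hmU => absurd (hk hmU) (by omega)
    simp only [Set.mem_union, not_or] at hmU
    exact ⟨hmU.1.1.1.1, hmU.1.1.1.2, hmU.1.1.2, hmU.1.2, hmU.2⟩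
  exact Nat.sInf_mem ⟨_, hfresh⟩ m hm

/-- The shape of the rules Dec and Exp: `a0` is consumed, `NA` and `NT` carry fresh labels. -/
theorem extend {A S T NA NT : Set (AUE F)} {a0 : AUE F} {θ θ' : ℕ → Tm F}
    (h : WellLabeled ⟨insert a0 A, S, T, θ⟩) (hNA : NA.Finite) (hNT : NT.Finite)
    (hvalid : ValidAUEs NA) (hdisj : Disjoint (labels NA) (labels NT))
    (hfresh : ∀ m ∈ labels NA ∪ labels NT, FreshIn ⟨insert a0 A, S, T, θ⟩ m)
    (hθ' : FinDom θ') : WellLabeled ⟨NA ∪ A, S, NT ∪ T, θ'⟩ := by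
  have hA : labels A ⊆ labels (insert a0 A) := labels_mono (Set.subset_insert _ _)
  have hfA : Disjoint (labels NA ∪ labels NT) (labels A) :=
    Set.disjoint_left.2 fun m hm hmA => (hfresh m hm).1 (hA hmA)
  have hfS : Disjoint (labels NA ∪ labels NT) (labels S) :=
    Set.disjoint_left.2 fun m hm => (hfresh m hm).2.1
  have hfT : Disjoint (labels NA ∪ labels NT) (labels T) :=
    Set.disjoint_left.2 fun m hm => (hfresh m hm).2.2.1
  refine ⟨hNA.union (h.finA.subset (Set.subset_insert _ _)), h.finS, hNT.union h.finT,
    hvalid.union (h.validA.mono (Set.subset_insert _ _)) (hfA.mono_left Set.subset_union_left),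
    h.validS, ?_, ?_, ?_, hθ'⟩ <;>
    simp only [labels_union, Set.disjoint_union_left, Set.disjoint_union_right] at hfA hfS hfT ⊢
  · exact ⟨hfS.1, h.disjAS.mono_left hA⟩
  · exact ⟨⟨hdisj, hfA.2.symm⟩, hfT.1, h.disjAT.mono_left hA⟩
  · exact ⟨hfS.2.symm, h.disjST⟩

theorem step {C C' : Config F} (h : WellLabeled C) (hs : Step Th C C') : WellLabeled C' := by
  have hfresh {C : Config F} (hC : WellLabeled C) (k : ℕ) : FreshIn C (nextFresh C + k) :=
    hC.freshIn_of_nextFresh_le (Nat.le_add_right _ _)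
  cases hs with
  | dec _ _ _ _ _ _ _ T _ _ _ hys =>
    rw [← Set.empty_union T]
    refine h.extend (zipAUEs_finite _ _ _) Set.finite_empty
      (validAUEs_zipAUEs _ _ (hys ▸ List.nodup_range.map (add_right_injective _)))
      (by simp [labels]) ?_ (h.finDom.compOne _ _)
    rintro m (⟨a, ha, rfl⟩ | ⟨a, ha, rfl⟩)
    · obtain ⟨k, -, hk⟩ := List.mem_map.1 (hys ▸ lab_mem_of_mem_zipAUEs ha)
      exact hk ▸ hfresh h k
    · exact absurd ha (Set.notMem_empty a)
  | sol a A _ _ _ _ _ hnotin =>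
    have hA : labels A ⊆ labels (insert a A) := labels_mono (Set.subset_insert _ _)
    have ha : a.lab ∈ labels (insert a A) := mem_labels (Set.mem_insert _ _)
    refine ⟨h.finA.subset (Set.subset_insert _ _), h.finS.insert _, h.finT,
      h.validA.mono (Set.subset_insert _ _),
      validAUEs_insert h.validS (Set.disjoint_left.1 h.disjAS ha), ?_,
      h.disjAT.mono_left hA, ?_, h.finDom⟩ <;>
      simp only [labels_insert, Set.disjoint_insert_left, Set.disjoint_insert_right]
    · exact ⟨h.validA.lab_notMem_labels hnotin, h.disjAS.mono_left hA⟩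
    · exact ⟨Set.disjoint_left.1 h.disjAT ha, h.disjST⟩
  | expLA1 _ _ _ _ _ _ _ _ _ _ _ _ _ hy1 hy2 | expLA2 _ _ _ _ _ _ _ _ _ _ _ _ _ hy1 hy2
  | expRA1 _ _ _ _ _ _ _ _ _ _ _ _ _ hy1 hy2 | expRA2 _ _ _ _ _ _ _ _ _ _ _ _ _ hy1 hy2 =>
    simp only [Set.insert_eq]
    refine h.extend (Set.finite_singleton _) (Set.finite_singleton _)
      (fun _ hb _ hc _ => hb.trans hc.symm) (by simp [labels]; omega) ?_
      (h.finDom.compOne _ _)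
    simp only [labels, Set.image_singleton, Set.union_singleton, Set.mem_insert_iff,
      Set.mem_singleton_iff]
    rintro m (rfl | rfl) <;> first
      | exact hy1 ▸ hfresh h 0
      | exact hy2 ▸ hy1 ▸ hfresh h 1
  | mer s t x y S _ _ _ _ _ =>
    have hS : insert (⟨s, y, t⟩ : AUE F) S ⊆ insert ⟨s, x, t⟩ (insert ⟨s, y, t⟩ S) :=
      Set.subset_insert _ _
    exact ⟨Set.finite_empty, h.finS.subset hS, h.finT,
      fun a ha => absurd ha (Set.notMem_empty a), h.validS.mono hS,
      by simp [labels], by simp [labels],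
      h.disjST.mono_left (labels_mono hS), h.finDom.compOne _ _⟩

theorem of_reflTransGen {C C' : Config F} (h : WellLabeled C)
    (hder : Relation.ReflTransGen (Step Th) C C') : WellLabeled C' := by
  induction hder with
  | refl => exact h
  | tail _ hs ih => exact ih.step hs

end WellLabeled

def AUE.side (b : Bool) (a : AUE F) : Tm F := bif b then a.lhs else a.rhs

@[simp] theorem AUE.side_true (a : AUE F) : a.side true = a.lhs := rfl

@[simp] theorem AUE.side_false (a : AUE F) : a.side false = a.rhs := rfl

def SolvesSide (Th : AbsTh Sg) (b : Bool) (C : Config F) (φ : ℕ → Tm F) : Prop :=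
  (∀ a ∈ C.A ∪ C.S, AbsEq Th (φ a.lab) (a.side b)) ∧
  ∀ a ∈ C.T, a.side (!b) = starTm Sg → AbsEq Th (φ a.lab) (a.side b)

theorem AbsEq.app₂ {u₁ u₂ v₁ v₂ : Tm F} (h₁ : AbsEq Th u₁ v₁) (h₂ : AbsEq Th u₂ v₂) (f : F) :
    AbsEq Th (.app f [u₁, u₂]) (.app f [v₁, v₂]) :=
  .congr f (.cons h₁ (.cons h₂ .nil))

theorem AbsEq.absorb_left {f e : F} (hp : (f, e) ∈ Th.pairs) {u₁ : Tm F}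
    (h₁ : AbsEq Th u₁ (.app e [])) (u₂ : Tm F) : AbsEq Th (.app f [u₁, u₂]) (.app e []) :=
  (h₁.app₂ (.refl u₂) f).trans (.absL u₂ hp)

theorem AbsEq.absorb_right {f e : F} (hp : (f, e) ∈ Th.pairs) {u₂ : Tm F}
    (h₂ : AbsEq Th u₂ (.app e [])) (u₁ : Tm F) : AbsEq Th (.app f [u₁, u₂]) (.app e []) :=
  ((AbsEq.refl u₁).app₂ h₂ f).trans (.absR u₁ hp)

theorem forall₂_absEq_of_zipAUEs {ss ts : List (Tm F)} {ys : List ℕ} {φ : ℕ → Tm F} {b : Bool}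
    (hys : ys.length = ss.length) (hlen : ss.length = ts.length)
    (h : ∀ a ∈ zipAUEs ss ys ts, AbsEq Th (φ a.lab) (a.side b)) :
    List.Forall₂ (AbsEq Th) (ys.map φ) (bif b then ss else ts) := by
  refine List.forall₂_of_length_eq_of_get (by cases b <;> simp [hys, hlen]) fun i h₁ h₂ => ?_
  have hi : i < ys.length := by simpa using h₁
  have := h _ ⟨i, by omega, hi, by omega, rfl⟩
  cases b <;> simpa using this

theorem SolvesSide.of_compOne {b : Bool} {C C' : Config F} {a0 : AUE F} {t : Tm F}
    {φ' : ℕ → Tm F} (h : WellLabeled C) (hφ' : SolvesSide Th b C' φ') (ha0 : a0 ∈ C.A ∪ C.S)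
    (hAS : C.A ∪ C.S ⊆ insert a0 (C'.A ∪ C'.S)) (hT : C.T ⊆ C'.T)
    (ht : AbsEq Th (t.subst φ') (a0.side b)) :
    SolvesSide Th b C (fun v => (single a0.lab t v).subst φ') := by
  have hval {a : AUE F} (ha : a ∈ C.A ∪ C.S ∪ C.T)
      (hφa : a.lab ≠ a0.lab → AbsEq Th (φ' a.lab) (a.side b)) :
      AbsEq Th ((single a0.lab t a.lab).subst φ') (a.side b) := by
    by_cases hlab : a.lab = a0.lab
    · obtain rfl := h.eq_of_lab_eq ha0 ha hlab
      rwa [single_self]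
    · rw [single_of_ne hlab, subst_var]
      exact hφa hlab
  refine ⟨fun a ha => hval (Or.inl ha) fun hlab => ?_,
    fun a ha hstar => hval (Or.inr ha) fun _ => hφ'.2 a (hT ha) hstar⟩
  rcases hAS ha with rfl | ha'
  · exact absurd rfl hlab
  · exact hφ'.1 a ha'

theorem Step.pull {b : Bool} {C C' : Config F} (h : WellLabeled C) (hs : Step Th C C')
    {φ' : ℕ → Tm F} (hφ' : SolvesSide Th b C' φ') :
    ∃ φ, SolvesSide Th b C φ ∧ ∀ z, (C.θ z).subst φ = (C'.θ z).subst φ' := by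
  have hsub {a0 : AUE F} {A A' S S' : Set (AUE F)} (hA : A ⊆ A') (hS : S ⊆ S') :
      insert a0 A ∪ S ⊆ insert a0 (A' ∪ S') := by
    rw [Set.insert_union]
    exact Set.insert_subset_insert (Set.union_subset_union hA hS)
  cases hs with
  | dec f ss ts _ ys _ _ _ _ hlen _ hys =>
    have hyslen : ys.length = ss.length := by simp [hys]
    have hargs := AbsEq.congr (Th := Th) f
      (forall₂_absEq_of_zipAUEs hyslen hlen fun a ha => hφ'.1 a (Or.inl (Or.inl ha)))
    refine ⟨_, SolvesSide.of_compOne h hφ' (Or.inl (Set.mem_insert _ _))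
      (hsub Set.subset_union_right subset_rfl) subset_rfl ?_,
      fun z => (subst_subst _ _ _).symm⟩
    simp only [subst_app, List.map_map, Function.comp_def, subst_var]
    cases b <;> exact hargs
  | sol =>
    refine ⟨φ', ⟨fun c hc => hφ'.1 c ?_, hφ'.2⟩, fun _ => rfl⟩
    simpa only [Set.insert_union, Set.union_insert] using hc
  | expLA1 f _ _ _ _ _ _ _ _ _ _ hp | expLA2 f _ _ _ _ _ _ _ _ _ _ hp
  | expRA1 f _ _ _ _ _ _ _ _ _ _ hp | expRA2 f _ _ _ _ _ _ _ _ _ _ hp =>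
    refine ⟨_, SolvesSide.of_compOne h hφ' (Or.inl (Set.mem_insert _ _))
      (hsub (Set.subset_insert _ _) subset_rfl) (Set.subset_insert _ _) ?_,
      fun z => (subst_subst _ _ _).symm⟩
    simp only [subst_app, List.map_cons, List.map_nil, subst_var]
    have hA := hφ'.1 _ (Or.inl (Set.mem_insert _ _))
    have hT := hφ'.2 _ (Set.mem_insert _ _)
    -- On the side of `ε_f` the new unsolved AUE absorbs; on the other side both
    -- arguments are matched, one of them through the new wild AUE.
    cases b <;> first
      | exact hA.absorb_left hp _
      | exact hA.absorb_right hp _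
      | exact hA.app₂ (hT rfl) f
      | exact (hT rfl).app₂ hA f
  | mer =>
    refine ⟨_, SolvesSide.of_compOne h hφ' (Or.inr (Set.mem_insert _ _))
      (by rw [Set.empty_union, Set.empty_union]) subset_rfl ?_,
      fun z => (subst_subst _ _ _).symm⟩
    rw [subst_var]
    exact hφ'.1 _ (Or.inr (Set.mem_insert _ _))

theorem SolvesSide.of_reflTransGen {b : Bool} {C C' : Config F} (h : WellLabeled C)
    (hder : Relation.ReflTransGen (Step Th) C C') {φ' : ℕ → Tm F}
    (hφ' : SolvesSide Th b C' φ') :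
    ∃ φ, SolvesSide Th b C φ ∧ ∀ z, (C.θ z).subst φ = (C'.θ z).subst φ' := by
  induction hder generalizing φ' with
  | refl => exact ⟨φ', hφ', fun _ => rfl⟩
  | tail hmid hs ih =>
    obtain ⟨φm, hφm, hθm⟩ := Step.pull (h.of_reflTransGen hmid) hs hφ'
    obtain ⟨φ, hφ, hθ⟩ := ih hφm
    exact ⟨φ, hφ, fun z => (hθ z).trans (hθm z)⟩

noncomputable def sideW (b : Bool) (W : Set (AUE F)) : ℕ → Tm F :=
  bif b then sigmaW W else rhoW W

theorem sideW_lab {W : Set (AUE F)} (hW : ValidAUEs W) {a : AUE F} (ha : a ∈ W) (b : Bool) :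
    sideW b W a.lab = a.side b := by
  have hex : ∃ c, c ∈ W ∧ c.lab = a.lab := ⟨a, ha, rfl⟩
  have hc : hex.choose = a := hW _ hex.choose_spec.1 _ ha hex.choose_spec.2
  cases b <;> simp only [sideW, cond_true, cond_false, sigmaW, rhoW, dif_pos hex, hc,
    AUE.side_true, AUE.side_false]

theorem finDom_sideW {W : Set (AUE F)} (hW : W.Finite) (b : Bool) : FinDom (sideW b W) := by
  refine (hW.image AUE.lab).subset fun y hy => ?_
  by_contra hyW
  have hex : ¬ ∃ c, c ∈ W ∧ c.lab = y := fun ⟨c, hc, hcy⟩ => hyW ⟨c, hc, hcy⟩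
  cases b <;> exact hy (by simp only [sideW, cond_true, cond_false, sigmaW, rhoW, dif_neg hex])

theorem SolvesSide.of_mem_psi {C : Config F} (h : WellLabeled C) (hA : C.A = ∅)
    {τ : ℕ → Tm F} (hτ : τ ∈ Psi Th C.T C.S) (b : Bool) :
    SolvesSide Th b C (fun v => (τ v).subst (sideW b C.S)) := by
  refine ⟨fun a ha => ?_, fun a ha hstar => ?_⟩
  · have haS : a ∈ C.S := by simpa [hA] using ha
    have hτa : τ a.lab = .var a.lab := by
      by_contra hne
      exact Set.disjoint_left.1 h.disjST (mem_labels haS) (hτ.1 ▸ hne)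
    show AbsEq Th ((τ a.lab).subst _) _
    rw [hτa, subst_var, sideW_lab h.validS haS]
    exact .refl _
  · cases b
    · exact ((hτ.2 a ha).1 hstar).1
    · exact ((hτ.2 a ha).2 hstar).1

end

theorem aunif_soundness_tau_general {F : Type} {Sg : AbsSig F} (Th : AbsTh Sg)
    (C0 Cn : Config F) (h0 : IsConfig Th C0)
    (hder : Relation.ReflTransGen (Step Th) C0 Cn)
    (hAn : Cn.A = ∅)
    (a : AUE F) (ha : a ∈ C0.A ∪ C0.S)
    (τ : ℕ → Tm F) (hτ : τ ∈ Psi Th Cn.T Cn.S) :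
    Gen Th ((Cn.θ a.lab).subst τ) a.lhs a.rhs := by
  have hn : WellLabeled Cn := h0.wellLabeled.of_reflTransGen hder
  have hx : C0.θ a.lab = .var a.lab := by
    by_contra hne
    rcases ha with ha | ha
    · exact Set.disjoint_left.1 h0.disjAD (mem_labels ha) hne
    · exact Set.disjoint_left.1 h0.disjSD (mem_labels ha) hne
  have hside (b : Bool) : MoreGen Th ((Cn.θ a.lab).subst τ) (a.side b) := by
    obtain ⟨φ, hφ, hθ⟩ :=
      SolvesSide.of_reflTransGen h0.wellLabeled hder (SolvesSide.of_mem_psi hn hAn hτ b)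
    refine ⟨sideW b Cn.S, finDom_sideW hn.finS b, ?_⟩
    rw [subst_subst, ← hθ a.lab, hx, subst_var]
    exact hφ.1 a ha
  exact ⟨hside true, hside false⟩

/-- Theorem 3, soundness with abstraction substitutions: for a
derivation `⟨A₀;S₀;T₀;θ₀⟩ ⟹* ⟨∅;Sₙ;Tₙ;θₙ⟩` to a final configuration and any
`s ≜_x t ∈ A₀ ∪ S₀`, the term `xθₙτ` is an `Abs`-generalization of `s` and `t`
for every abstraction substitution `τ ∈ Ψ(Tₙ,Sₙ)`. -/
theorem aunif_soundness_tau {F : Type} {Sg : AbsSig F} (Th : AbsTh Sg)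
    (C0 Cn : Config F) (h0 : IsConfig Th C0)
    (hder : Relation.ReflTransGen (Step Th) C0 Cn)
    (hAn : Cn.A = ∅) (hfin : Final Th Cn)
    (a : AUE F) (ha : a ∈ C0.A ∪ C0.S)
    (τ : ℕ → Tm F) (hτ : τ ∈ Psi Th Cn.T Cn.S) :
    Gen Th ((Cn.θ a.lab).subst τ) a.lhs a.rhs :=
  aunif_soundness_tau_general Th C0 Cn h0 hder hAn a ha τ hτ

end AbsAU
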